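/- Let 0 < α < 1/2 and 0 < τ < 1. Then Γ(2α−τ) · Γ(τ+1) · sin(π(α−τ)) ≠ Γ(2α) · sin(πα). -/

import Mathlib

/-!
By the reflection formula `sin (π s) = π / (Γ(s) Γ(1 - s))`, for `τ < α` the claim `LHS < RHS`
compares `Γ(x + α) Γ(y + α) / (Γ(x) Γ(y))` at the pairs `(α - τ, 1 - α + τ)` and `(α, 1 - α)`, which
have the same sum. In Gauss's product for `Γ`, every factor of this ratio decreases as the pair
spreads apart, i.e. as `x * y` decreases. For `α ≤ τ ≤ 2α` the left side is `≤ 0` while the right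
side is positive. For `2α < τ`, both `Γ(2α - τ)` and `sin (π (α - τ))` are negative; after
`Γ(2α - τ) = Γ(2α - τ + 1) / (2α - τ)`, the inequality `LHS > RHS` follows from two instances of
the log-convexity of `Γ`.
-/

open Real Filter Finset
open scoped Nat

section ConvexTwoPoint

variable {𝕜 : Type*} [Field 𝕜] [LinearOrder 𝕜] [IsStrictOrderedRing 𝕜] {s : Set 𝕜} {f : 𝕜 → 𝕜}

theorem ConvexOn.add_le_add_of_le_of_le_of_add_eq (hf : ConvexOn 𝕜 s f) {a b c d : 𝕜}
    (ha : a ∈ s) (hb : b ∈ s) (hac : a ≤ c) (hcb : c ≤ b) (hsum : c + d = a + b) :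
    f c + f d ≤ f a + f b := by
  obtain rfl : d = a + b - c := by linear_combination hsum
  rcases hac.eq_or_lt with rfl | hac
  · simp
  rcases hcb.eq_or_lt with rfl | hcb
  · simp [add_comm]
  have hc := hf.secant_mono_aux1 ha hb hac hcb
  have hd := hf.secant_mono_aux1 ha hb (show a < a + b - c by linarith)
    (show a + b - c < b by linarith)
  refine le_of_mul_le_mul_left ?_ (sub_pos.2 (hac.trans hcb))
  linear_combination hc + hd

end ConvexTwoPoint

theorem shifted_prod_sub_prod {R : Type*} [CommRing R] {x y x' y' : R} (a t : R)
    (hs : x + y = x' + y') :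
    (x + a + t) * (y + a + t) * (x' + t) * (y' + t) -
        (x' + a + t) * (y' + a + t) * (x + t) * (y + t) =
      (x' * y' - x * y) * a * (2 * t + a + x + y) := by
  obtain rfl : y' = x + y - x' := by linear_combination -hs
  ring

namespace Real

theorem Gamma_mul_Gamma_le_Gamma_mul_Gamma {a b c d : ℝ} (ha : 0 < a) (hac : a ≤ c) (hcb : c ≤ b)
    (hsum : c + d = a + b) : Gamma c * Gamma d ≤ Gamma a * Gamma b := by
  have hab : a ≤ b := hac.trans hcb
  have had : a ≤ d := by linarith
  have hpos {x : ℝ} (hx : a ≤ x) : 0 < Gamma x := Gamma_pos_of_pos (ha.trans_le hx)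
  have hlog := convexOn_log_Gamma.add_le_add_of_le_of_le_of_add_eq ha (ha.trans_le hab) hac hcb hsum
  simp only [Function.comp_apply] at hlog
  rwa [← log_mul (hpos hac).ne' (hpos had).ne', ← log_mul (hpos le_rfl).ne' (hpos hab).ne',
    log_le_log_iff (mul_pos (hpos hac) (hpos had)) (mul_pos (hpos le_rfl) (hpos hab))] at hlog

theorem sin_pi_mul_eq_pi_div_Gamma_mul_Gamma (s : ℝ) :
    sin (π * s) = π / (Gamma s * Gamma (1 - s)) := by
  rw [Gamma_mul_Gamma_one_sub, div_div_cancel₀ pi_pos.ne']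

theorem GammaSeq_mul_prod {s : ℝ} (hs : 0 < s) (n : ℕ) :
    GammaSeq s n * ∏ j ∈ range (n + 1), (s + j) = n ^ s * n ! :=
  div_mul_cancel₀ _ (prod_ne_zero_iff.2 fun j _ => by positivity)

section Spread

variable {a x y x' y' : ℝ}

theorem GammaSeq_add_mul_GammaSeq_add_le (ha : 0 ≤ a) (hx : 0 < x) (hy : 0 < y) (hx' : 0 < x')
    (hy' : 0 < y') (hs : x + y = x' + y') (hxy : x * y ≤ x' * y') {n : ℕ} (hn : 0 < n) :
    GammaSeq (x + a) n * GammaSeq (y + a) n * GammaSeq x' n * GammaSeq y' n ≤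
      GammaSeq (x' + a) n * GammaSeq (y' + a) n * GammaSeq x n * GammaSeq y n := by
  have hxa : 0 < x + a := by linarith
  have hya : 0 < y + a := by linarith
  have hxa' : 0 < x' + a := by linarith
  have hya' : 0 < y' + a := by linarith
  set P : ℝ → ℝ := fun s => ∏ j ∈ range (n + 1), (s + j) with hP
  have hPpos {s : ℝ} (hs : 0 < s) : 0 < P s := prod_pos fun j _ => by positivity
  have hden : P (x' + a) * P (y' + a) * P x * P y ≤ P (x + a) * P (y + a) * P x' * P y' := by
    simp only [hP, ← prod_mul_distrib]
    refine prod_le_prod (fun j _ => by positivity) fun j _ => sub_nonneg.1 ?_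
    rw [shifted_prod_sub_prod a (j : ℝ) hs]
    have := sub_nonneg.2 hxy
    positivity
  have hnum : (GammaSeq (x + a) n * GammaSeq (y + a) n * GammaSeq x' n * GammaSeq y' n) *
      (P (x + a) * P (y + a) * P x' * P y') =
      (GammaSeq (x' + a) n * GammaSeq (y' + a) n * GammaSeq x n * GammaSeq y n) *
      (P (x' + a) * P (y' + a) * P x * P y) := by
    have hn' : (0 : ℝ) < n := Nat.cast_pos.2 hn
    calc _ = (GammaSeq (x + a) n * P (x + a)) * (GammaSeq (y + a) n * P (y + a)) *
            (GammaSeq x' n * P x') * (GammaSeq y' n * P y') := by ring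
      _ = (GammaSeq (x' + a) n * P (x' + a)) * (GammaSeq (y' + a) n * P (y' + a)) *
            (GammaSeq x n * P x) * (GammaSeq y n * P y) := by
        rw [GammaSeq_mul_prod hxa, GammaSeq_mul_prod hya, GammaSeq_mul_prod hx',
          GammaSeq_mul_prod hy', GammaSeq_mul_prod hxa', GammaSeq_mul_prod hya',
          GammaSeq_mul_prod hx, GammaSeq_mul_prod hy, rpow_add hn', rpow_add hn', rpow_add hn',
          rpow_add hn']
        ring
      _ = _ := by ring
  have hR : 0 ≤ GammaSeq (x' + a) n * GammaSeq (y' + a) n * GammaSeq x n * GammaSeq y n := by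
    simp only [GammaSeq]
    positivity
  have := hPpos hxa; have := hPpos hya; have := hPpos hx'; have := hPpos hy'
  exact le_of_mul_le_mul_right (hnum ▸ mul_le_mul_of_nonneg_left hden hR) (by positivity)

theorem Gamma_add_mul_Gamma_add_le (ha : 0 ≤ a) (hx : 0 < x) (hy : 0 < y) (hx' : 0 < x')
    (hy' : 0 < y') (hs : x + y = x' + y') (hxy : x * y ≤ x' * y') :
    Gamma (x + a) * Gamma (y + a) * Gamma x' * Gamma y' ≤
      Gamma (x' + a) * Gamma (y' + a) * Gamma x * Gamma y := by
  have hlim (u v w z : ℝ) :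
      Tendsto (fun n => GammaSeq u n * GammaSeq v n * GammaSeq w n * GammaSeq z n) atTop
        (nhds (Gamma u * Gamma v * Gamma w * Gamma z)) :=
    (((GammaSeq_tendsto_Gamma u).mul (GammaSeq_tendsto_Gamma v)).mul
      (GammaSeq_tendsto_Gamma w)).mul (GammaSeq_tendsto_Gamma z)
  exact le_of_tendsto_of_tendsto (hlim _ _ _ _) (hlim _ _ _ _) <| eventually_atTop.2
    ⟨1, fun n hn => GammaSeq_add_mul_GammaSeq_add_le ha hx hy hx' hy' hs hxy hn⟩

theorem Gamma_add_mul_Gamma_add_lt (ha : 0 < a) (hx : 0 < x) (hy : 0 < y) (hx' : 0 < x')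
    (hy' : 0 < y') (hs : x + y = x' + y') (hxy : x * y < x' * y') :
    Gamma (x + a) * Gamma (y + a) * Gamma x' * Gamma y' <
      Gamma (x' + a) * Gamma (y' + a) * Gamma x * Gamma y := by
  -- Shifting all four points by `1` peels off the first Gauss factor, the one where the
  -- comparison is strict.
  have hshift := Gamma_add_mul_Gamma_add_le ha.le (x := x + 1) (y := y + 1) (x' := x' + 1)
    (y' := y' + 1) (by linarith) (by linarith) (by linarith) (by linarith) (by linarith)
    (by nlinarith)
  simp only [add_right_comm _ (1 : ℝ) a] at hshift
  rw [Gamma_add_one (by positivity), Gamma_add_one (by positivity), Gamma_add_one hx'.ne',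
    Gamma_add_one hy'.ne', Gamma_add_one (by positivity), Gamma_add_one (by positivity),
    Gamma_add_one hx.ne', Gamma_add_one hy.ne'] at hshift
  have hfactor : (x' + a) * (y' + a) * x * y < (x + a) * (y + a) * x' * y' := by
    have hsub := shifted_prod_sub_prod a 0 hs
    simp only [add_zero, mul_zero, zero_add] at hsub
    have := sub_pos.2 hxy
    exact sub_pos.1 (hsub ▸ by positivity)
  refine lt_of_mul_lt_mul_left ?_ (by positivity : 0 ≤ (x' + a) * (y' + a) * x * y)
  have hL : 0 < Gamma (x + a) * Gamma (y + a) * Gamma x' * Gamma y' := by positivity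
  calc _ < (x + a) * (y + a) * x' * y' * (Gamma (x + a) * Gamma (y + a) * Gamma x' * Gamma y') :=
        mul_lt_mul_of_pos_right hfactor hL
    _ ≤ (x' + a) * (y' + a) * x * y * (Gamma (x' + a) * Gamma (y' + a) * Gamma x * Gamma y) := by
        linear_combination hshift

end Spread

section TranscendentalEq

variable {α τ : ℝ}

theorem Gamma_sub_mul_Gamma_add_one_mul_sin_lt (hτ : 0 < τ) (hτα : τ < α) (hα : α < 1 / 2) :
    Gamma (2 * α - τ) * Gamma (τ + 1) * sin (π * (α - τ)) < Gamma (2 * α) * sin (π * α) := by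
  have key := Gamma_add_mul_Gamma_add_lt (a := α) (x := α - τ) (y := 1 - (α - τ)) (x' := α)
    (y' := 1 - α) (by linarith) (by linarith) (by linarith) (by linarith) (by linarith) (by ring)
    (by nlinarith)
  rw [show α - τ + α = 2 * α - τ by ring, show 1 - (α - τ) + α = τ + 1 by ring,
    show α + α = 2 * α by ring, show 1 - α + α = 1 by ring, Gamma_one, mul_one] at key
  have h₁ : 0 < Gamma (α - τ) := Gamma_pos_of_pos (by linarith)
  have h₂ : 0 < Gamma (1 - (α - τ)) := Gamma_pos_of_pos (by linarith)
  have h₃ : 0 < Gamma α := Gamma_pos_of_pos (by linarith)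
  have h₄ : 0 < Gamma (1 - α) := Gamma_pos_of_pos (by linarith)
  rw [sin_pi_mul_eq_pi_div_Gamma_mul_Gamma, sin_pi_mul_eq_pi_div_Gamma_mul_Gamma, mul_div_assoc',
    mul_div_assoc', div_lt_div_iff₀ (by positivity) (by positivity)]
  linear_combination π * key

theorem Gamma_sub_mul_Gamma_add_one_mul_sin_nonpos (hατ : α ≤ τ) (hτ2α : τ ≤ 2 * α)
    (hτα1 : τ ≤ α + 1) : Gamma (2 * α - τ) * Gamma (τ + 1) * sin (π * (α - τ)) ≤ 0 := by
  refine mul_nonpos_of_nonneg_of_nonpos (mul_nonneg (Gamma_nonneg_of_nonneg (by linarith))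
    (Gamma_nonneg_of_nonneg (by linarith))) ?_
  rw [← neg_sub, mul_neg, sin_neg, neg_nonpos]
  exact sin_nonneg_of_nonneg_of_le_pi (by nlinarith [pi_pos]) (by nlinarith [pi_pos])

theorem Gamma_mul_sin_pos (hα : 0 < α) (hα1 : α < 1) : 0 < Gamma (2 * α) * sin (π * α) :=
  mul_pos (by positivity) (sin_pos_of_pos_of_lt_pi (by positivity) (by nlinarith [pi_pos]))

theorem lt_Gamma_sub_mul_Gamma_add_one_mul_sin (hα : 0 < α) (h2ατ : 2 * α < τ) (hτ : τ < 1) :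
    Gamma (2 * α) * sin (π * α) < Gamma (2 * α - τ) * Gamma (τ + 1) * sin (π * (α - τ)) := by
  have h₁ : 0 < Gamma (τ - α) := Gamma_pos_of_pos (by linarith)
  have h₂ : 0 < Gamma (1 - (τ - α)) := Gamma_pos_of_pos (by linarith)
  have h₃ : 0 < Gamma (1 - α) := Gamma_pos_of_pos (by linarith)
  have h₄ : 0 < Gamma (τ + 1) := Gamma_pos_of_pos (by linarith)
  have h₅ : 0 < τ - 2 * α := by linarith
  have hlhs : Gamma (2 * α - τ) * Gamma (τ + 1) * sin (π * (α - τ)) =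
      Gamma (2 * α - τ + 1) * Gamma (τ + 1) * π /
        ((τ - 2 * α) * (Gamma (τ - α) * Gamma (1 - (τ - α)))) := by
    have hsin : sin (π * (α - τ)) = -(π / (Gamma (τ - α) * Gamma (1 - (τ - α)))) := by
      rw [← sin_pi_mul_eq_pi_div_Gamma_mul_Gamma, ← sin_neg, ← mul_neg, neg_sub]
    rw [Gamma_add_one (s := 2 * α - τ) (by linarith), hsin, ← neg_sub τ]
    field_simp
  have hrec : (τ - 2 * α) * Gamma (τ - α) < Gamma (τ - α + 1) := by
    rw [Gamma_add_one (by linarith)]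
    nlinarith
  have hconvex₁ := Gamma_mul_Gamma_le_Gamma_mul_Gamma (a := 1 - α) (b := τ + 1) (c := 1)
    (d := τ - α + 1) (by linarith) (by linarith) (by linarith) (by ring)
  rw [Gamma_one, one_mul] at hconvex₁
  have hconvex₂ := Gamma_mul_Gamma_le_Gamma_mul_Gamma (a := α) (b := 2 * α - τ + 1) (c := 2 * α)
    (d := 1 - (τ - α)) hα (by linarith) (by linarith) (by ring)
  have key : (τ - 2 * α) * Gamma (τ - α) * (Gamma (2 * α) * Gamma (1 - (τ - α))) <
      Gamma (1 - α) * Gamma (τ + 1) * (Gamma α * Gamma (2 * α - τ + 1)) :=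
    calc _ < Gamma (τ - α + 1) * (Gamma (2 * α) * Gamma (1 - (τ - α))) :=
          mul_lt_mul_of_pos_right hrec (by positivity)
      _ ≤ _ := mul_le_mul hconvex₁ hconvex₂ (by positivity) (by positivity)
  rw [hlhs, sin_pi_mul_eq_pi_div_Gamma_mul_Gamma, mul_div_assoc',
    div_lt_div_iff₀ (by positivity) (by positivity)]
  linear_combination π * key

end TranscendentalEq

end Real

theorem no_root_transcendental_eq_low_regularity
    (α τ : ℝ) (hα : 0 < α) (hα' : α < 1 / 2) (hτ : 0 < τ) (hτ' : τ < 1) :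
    Real.Gamma (2 * α - τ) * Real.Gamma (τ + 1) * Real.sin (Real.pi * (α - τ)) ≠
      Real.Gamma (2 * α) * Real.sin (Real.pi * α) := by
  rcases lt_or_ge τ α with hτα | hατ
  · exact (Gamma_sub_mul_Gamma_add_one_mul_sin_lt hτ hτα hα').ne
  rcases le_or_gt τ (2 * α) with hτ2α | h2ατ
  · exact ((Gamma_sub_mul_Gamma_add_one_mul_sin_nonpos hατ hτ2α (by linarith)).trans_lt
      (Gamma_mul_sin_pos hα (by linarith))).ne
  · exact (lt_Gamma_sub_mul_Gamma_add_one_mul_sin hα h2ατ hτ').ne'
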